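/- The Gaussian skew-kernel differential identity holds: for a ∈ ℝ and k ≥ 1, the function \hat{κ}_k(z,a) := e^{-2za} κ_k(z,a), where κ_k(z,a) = √2 ∑_{m=0}^{k-1} ∑_{ℓ=0}^{m} [ (√2 z)^{2m+1}(√2 a)^{2ℓ}/((2m+1)!!(2ℓ)!!) − (√2 a)^{2m+1}(√2 z)^{2ℓ}/((2m+1)!!(2ℓ)!!) ], satisfies ∂_z \hat{κ}_k(z,a) = 2(z−a)\hat{κ}_k(z,a) + 2 e_{2k-1}(2za) e^{-2za} − 2 ((2z²)^k/(2k−1)!!) e_{k-1}(a²) e^{-2za}. -/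

import Mathlib

/-- The finite-`k` Gaussian GinSE skew-kernel `κ_k(z,a)`. -/
noncomputable def kappaG (k : ℕ) (a : ℝ) (z : ℂ) : ℂ :=
  (Real.sqrt 2 : ℂ) * ∑ m ∈ Finset.range k, ∑ ℓ ∈ Finset.range (m + 1),
    (((Real.sqrt 2 : ℂ) * z) ^ (2 * m + 1) * ((Real.sqrt 2 : ℂ) * (a : ℂ)) ^ (2 * ℓ) /
        ((Nat.doubleFactorial (2 * m + 1) : ℂ) * (Nat.doubleFactorial (2 * ℓ) : ℂ)) -
      ((Real.sqrt 2 : ℂ) * (a : ℂ)) ^ (2 * m + 1) * ((Real.sqrt 2 : ℂ) * z) ^ (2 * ℓ) /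
        ((Nat.doubleFactorial (2 * m + 1) : ℂ) * (Nat.doubleFactorial (2 * ℓ) : ℂ)))

namespace SKaux

open Finset

noncomputable def sc : ℂ := (Real.sqrt 2 : ℂ)

lemma hsc2 : sc ^ 2 = 2 := by
  rw [sc, ← Complex.ofReal_pow, Real.sq_sqrt (by norm_num : (0:ℝ) ≤ 2)]
  norm_num

noncomputable def dd (k ℓ : ℕ) : ℂ :=
  ((2*k+1).doubleFactorial : ℂ) * ((2*ℓ).doubleFactorial : ℂ)

noncomputable def rterm (k : ℕ) (a : ℝ) (u : ℂ) (ℓ : ℕ) : ℂ :=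
  (sc*u)^(2*k+1)*(sc*(a:ℂ))^(2*ℓ)/dd k ℓ - (sc*(a:ℂ))^(2*k+1)*(sc*u)^(2*ℓ)/dd k ℓ

noncomputable def dterm (k : ℕ) (a : ℝ) (z : ℂ) (ℓ : ℕ) : ℂ :=
  ((2*k+1 : ℕ):ℂ)*(sc*z)^(2*k)*sc*(sc*(a:ℂ))^(2*ℓ)/dd k ℓ
    - (sc*(a:ℂ))^(2*k+1)*(((2*ℓ : ℕ):ℂ)*(sc*z)^(2*ℓ-1)*sc)/dd k ℓ

lemma kappa_zero (a : ℝ) : kappaG 0 a = fun _ => 0 := by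
  funext u; simp [kappaG]

lemma kappa_succ (k : ℕ) (a : ℝ) :
    kappaG (k+1) a = fun u => kappaG k a u + sc * ∑ ℓ ∈ range (k+1), rterm k a u ℓ := by
  funext u
  simp only [kappaG, sum_range_succ, mul_add, rterm, dd, sc]

lemma row_hasDerivAt (k : ℕ) (a : ℝ) (z : ℂ) :
    HasDerivAt (fun u => sc * ∑ ℓ ∈ range (k+1), rterm k a u ℓ)
      (sc * ∑ ℓ ∈ range (k+1), dterm k a z ℓ) z := by
  have hid : HasDerivAt (fun u : ℂ => sc * u) sc z := by
    simpa using (hasDerivAt_id z).const_mul sc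
  have h : ∀ ℓ ∈ range (k+1), HasDerivAt (fun u => rterm k a u ℓ) (dterm k a z ℓ) z := by
    intro ℓ _
    have h1 := ((hid.pow (2*k+1)).mul_const ((sc*(a:ℂ))^(2*ℓ))).div_const (dd k ℓ)
    have h2 := ((hid.pow (2*ℓ)).const_mul ((sc*(a:ℂ))^(2*k+1))).div_const (dd k ℓ)
    have h3 := h1.sub h2
    refine h3.congr_deriv ?_
    simp only [dterm, Nat.add_sub_cancel]
  exact (HasDerivAt.fun_sum h).const_mul sc

lemma tel (w : ℂ) (k : ℕ) :
    ∑ ℓ ∈ range (k+1),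
        (w^(2*ℓ+1)/(((2*ℓ).doubleFactorial : ℕ):ℂ)
          - ((2*ℓ:ℕ):ℂ)*w^(2*ℓ-1)/(((2*ℓ).doubleFactorial : ℕ):ℂ))
      = w^(2*k+1)/(((2*k).doubleFactorial : ℕ):ℂ) := by
  induction k with
  | zero => simp [Nat.doubleFactorial]
  | succ n ih =>
    rw [sum_range_succ, ih]
    have h1 : (2*(n+1)).doubleFactorial = (2*n+2) * (2*n).doubleFactorial := by
      rw [show 2*(n+1) = 2*n+2 by ring, Nat.doubleFactorial_add_two]
    have h0 : (((2*n).doubleFactorial : ℕ):ℂ) ≠ 0 :=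
      Nat.cast_ne_zero.2 (Nat.doubleFactorial_pos _).ne'
    have h2 : 2*(n+1)-1 = 2*n+1 := by omega
    have h3 : ((2*n+2 : ℕ):ℂ) ≠ 0 := Nat.cast_ne_zero.2 (by omega)
    have h4 : 2*(n+1)+1 = 2*n+1+2 := by ring
    rw [h2, h1, h4]
    push_cast at h3 ⊢
    field_simp
    ring

lemma S1eq (a : ℝ) (n : ℕ) :
    ∑ ℓ ∈ range n, (sc*(a:ℂ))^(2*ℓ)/(((2*ℓ).doubleFactorial : ℕ):ℂ)
      = ∑ j ∈ range n, ((a:ℂ)^2)^j/(Nat.factorial j : ℂ) := by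
  refine sum_congr rfl fun ℓ _ => ?_
  rw [Nat.doubleFactorial_two_mul, pow_mul]
  have hb : (sc*(a:ℂ))^2 = 2*((a:ℂ)^2) := by linear_combination ((a:ℂ)^2) * hsc2
  rw [hb, mul_pow]
  push_cast
  rw [mul_div_mul_left _ _ (pow_ne_zero ℓ (two_ne_zero : (2:ℂ) ≠ 0))]

lemma alg (X W Q G A N1 D K P : ℂ) (hN : N1 ≠ 0) (hD : D ≠ 0) (hK : K ≠ 0) (hP : P ≠ 0) :
    (2*N1*X - 2*(X*W))/(N1*D) * (G + A/K) + 2*Q/(N1*D)/(P*K)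
    = 2*(X*(P*A)/(P*K*D) + Q/((N1*D)*(P*K)))
      - (2*((X*W)/(N1*D)) * (G + A/K) - 2*(X/D) * G) := by
  have e1 : (2*N1*X - 2*(X*W))/(N1*D) = 2*X/D - 2*(X*W)/(N1*D) := by
    field_simp
  have e2 : X*(P*A)/(P*K*D) = X*A/(K*D) := by
    field_simp
  have e3 : (2*X/D) * (G + A/K) = 2*X/D*G + 2*(X*A/(K*D)) := by
    field_simp
  rw [e1, sub_mul, e3, e2]
  ring

lemma kappa_hasDerivAt (a : ℝ) (k : ℕ) (z : ℂ) :
    HasDerivAt (kappaG k a)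
      (2*z*kappaG k a z
        + 2*(∑ j ∈ range (2*k), (2*z*(a:ℂ))^j/(Nat.factorial j :ℂ))
        - 2*((2*z^2)^k/(((2*k-1).doubleFactorial : ℕ):ℂ))
            * ∑ j ∈ range k, ((a:ℂ)^2)^j/(Nat.factorial j :ℂ)) z := by
  induction k with
  | zero =>
    rw [kappa_zero]
    simpa [kappa_zero] using hasDerivAt_const z (0:ℂ)
  | succ n ih =>
    rw [kappa_succ]
    have h := ih.add (row_hasDerivAt n a z)
    refine h.congr_deriv ?_
    beta_reduce
    -- value identity
    have key : sc * ∑ ℓ ∈ range (n+1), dterm n a z ℓ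
        - 2*z*(sc * ∑ ℓ ∈ range (n+1), rterm n a z ℓ)
        = 2*((2*z*(a:ℂ))^(2*n)/(Nat.factorial (2*n) :ℂ)
              + (2*z*(a:ℂ))^(2*n+1)/(Nat.factorial (2*n+1):ℂ))
          - (2*((2*z^2)^(n+1)/(((2*(n+1)-1).doubleFactorial : ℕ):ℂ))
                * ∑ j ∈ range (n+1), ((a:ℂ)^2)^j/(Nat.factorial j :ℂ)
             - 2*((2*z^2)^n/(((2*n-1).doubleFactorial : ℕ):ℂ))
                * ∑ j ∈ range n, ((a:ℂ)^2)^j/(Nat.factorial j :ℂ)) := by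
      have hsum : sc * ∑ ℓ ∈ range (n+1), dterm n a z ℓ
          - 2*z*(sc * ∑ ℓ ∈ range (n+1), rterm n a z ℓ)
          = ∑ ℓ ∈ range (n+1), (sc * dterm n a z ℓ - 2*z*(sc * rterm n a z ℓ)) := by
        rw [Finset.mul_sum, Finset.mul_sum, Finset.mul_sum, ← Finset.sum_sub_distrib]
      rw [hsum]
      have hterm : ∀ ℓ ∈ range (n+1), sc * dterm n a z ℓ - 2*z*(sc * rterm n a z ℓ)
          = (2*((2*n+1:ℕ):ℂ)*(sc*z)^(2*n) - 2*(sc*z)^(2*n+2))/(((2*n+1).doubleFactorial:ℕ):ℂ)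
              * ((sc*(a:ℂ))^(2*ℓ)/(((2*ℓ).doubleFactorial:ℕ):ℂ))
            + 2*(sc*(a:ℂ))^(2*n+1)/(((2*n+1).doubleFactorial:ℕ):ℂ)
              * ((sc*z)^(2*ℓ+1)/(((2*ℓ).doubleFactorial:ℕ):ℂ)
                  - ((2*ℓ:ℕ):ℂ)*(sc*z)^(2*ℓ-1)/(((2*ℓ).doubleFactorial:ℕ):ℂ)) := by
        intro ℓ _
        simp only [dterm, rterm, dd]
        linear_combination ((((2*n+1:ℕ):ℂ)*(sc*z)^(2*n)*(sc*(a:ℂ))^(2*ℓ)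
          - (sc*(a:ℂ))^(2*n+1)*((2*ℓ:ℕ):ℂ)*(sc*z)^(2*ℓ-1))
            /(((2*n+1).doubleFactorial:ℕ):ℂ)/(((2*ℓ).doubleFactorial:ℕ):ℂ)) * hsc2
      rw [sum_congr rfl hterm, sum_add_distrib, ← mul_sum, ← mul_sum, tel, S1eq]
      have hb : (sc*z)^2 = 2*z^2 := by linear_combination (z^2) * hsc2
      have hwe : (sc*z)^(2*n) = (2*z^2)^n := by rw [pow_mul, hb]
      have hw2 : (sc*z)^(2*n+2) = (2*z^2)^n*(2*z^2) := by rw [pow_add, pow_mul, hb]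
      have hwo : (2*z*(a:ℂ))^(2*n+1) = (sc*(a:ℂ))^(2*n+1)*(sc*z)^(2*n+1) := by
        rw [← mul_pow]; congr 1; linear_combination (-(z*(a:ℂ))) * hsc2
      have hza : (2*z*(a:ℂ))^(2*n) = (2*z^2)^n * ((2:ℂ)^n * ((a:ℂ)^2)^n) := by
        rw [pow_mul, show (2*z*(a:ℂ))^2 = (2*z^2)*(2*((a:ℂ)^2)) by ring, mul_pow,
          show (2*((a:ℂ)^2))^n = (2:ℂ)^n*((a:ℂ)^2)^n from mul_pow 2 _ n]
      have hF1 : ((2*n+1).factorial : ℂ)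
          = (((2*n+1).doubleFactorial:ℕ):ℂ) * (((2*n).doubleFactorial:ℕ):ℂ) := by
        exact_mod_cast Nat.factorial_eq_mul_doubleFactorial (2*n)
      have hF2 : ((2*n).factorial : ℂ)
          = (((2*n).doubleFactorial:ℕ):ℂ) * (((2*n-1).doubleFactorial:ℕ):ℂ) := by
        cases n with
        | zero => simp [Nat.doubleFactorial]
        | succ m =>
          rw [show 2*(m+1) = 2*m+1+1 by ring, show 2*m+1+1-1 = 2*m+1 by omega]
          exact_mod_cast Nat.factorial_eq_mul_doubleFactorial (2*m+1)
      have hF3 : (((2*n+1).doubleFactorial:ℕ):ℂ)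
          = ((2*n+1:ℕ):ℂ) * (((2*n-1).doubleFactorial:ℕ):ℂ) := by
        cases n with
        | zero => simp [Nat.doubleFactorial]
        | succ m =>
          rw [show 2*(m+1)+1 = (2*m+1)+2 by ring, show 2*(m+1)-1 = 2*m+1 by omega,
            Nat.doubleFactorial_add_two]
          push_cast; ring
      have hF4 : (((2*n).doubleFactorial:ℕ):ℂ) = (2:ℂ)^n * (n.factorial : ℂ) := by
        exact_mod_cast Nat.doubleFactorial_two_mul n
      have ne1 : (((2*n+1).doubleFactorial:ℕ):ℂ) ≠ 0 :=
        Nat.cast_ne_zero.2 (Nat.doubleFactorial_pos _).ne'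
      have ne3 : (((2*n-1).doubleFactorial:ℕ):ℂ) ≠ 0 :=
        Nat.cast_ne_zero.2 (Nat.doubleFactorial_pos _).ne'
      have nef : ((n.factorial:ℕ):ℂ) ≠ 0 := Nat.cast_ne_zero.2 n.factorial_ne_zero
      have nen : ((2*n+1:ℕ):ℂ) ≠ 0 := Nat.cast_ne_zero.2 (by omega)
      have nep : ((2:ℂ))^n ≠ 0 := pow_ne_zero n two_ne_zero
      rw [show 2*(n+1)-1 = 2*n+1 by omega, hwe, hw2, hwo, hza, hF1, hF2, hF3, hF4,
        sum_range_succ]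
      linear_combination alg ((2*z^2)^n) (2*z^2)
        ((sc*(a:ℂ))^(2*n+1)*(sc*z)^(2*n+1))
        (∑ j ∈ range n, ((a:ℂ)^2)^j/(Nat.factorial j:ℂ)) (((a:ℂ)^2)^n)
        ((2*n+1:ℕ):ℂ) (((2*n-1).doubleFactorial:ℕ):ℂ) ((n.factorial:ℕ):ℂ) ((2:ℂ)^n)
        nen ne3 nef nep
    have hE : ∑ j ∈ range (2*(n+1)), (2*z*(a:ℂ))^j/(Nat.factorial j :ℂ)
        = ∑ j ∈ range (2*n), (2*z*(a:ℂ))^j/(Nat.factorial j :ℂ)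
          + ((2*z*(a:ℂ))^(2*n)/(Nat.factorial (2*n) :ℂ)
              + (2*z*(a:ℂ))^(2*n+1)/(Nat.factorial (2*n+1):ℂ)) := by
      rw [show 2*(n+1) = (2*n+1)+1 by ring, sum_range_succ, sum_range_succ]
      ring
    rw [hE]
    linear_combination key

end SKaux

theorem stmt_11 (a : ℝ) (k : ℕ) (hk : 1 ≤ k) (z : ℂ) :
    deriv (fun u : ℂ => Complex.exp (-2 * u * (a : ℂ)) * kappaG k a u) z =
      2 * (z - a) * (Complex.exp (-2 * z * (a : ℂ)) * kappaG k a z) +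
        2 * (∑ j ∈ Finset.range (2 * k), (2 * z * (a : ℂ)) ^ j / (Nat.factorial j : ℂ)) *
          Complex.exp (-2 * z * (a : ℂ)) -
        2 * ((2 * z ^ 2) ^ k / (Nat.doubleFactorial (2 * k - 1) : ℂ)) *
          (∑ j ∈ Finset.range k, ((a : ℂ) ^ 2) ^ j / (Nat.factorial j : ℂ)) *
            Complex.exp (-2 * z * (a : ℂ)) := by
  have hκ := SKaux.kappa_hasDerivAt a k z
  have hl : HasDerivAt (fun u : ℂ => -2 * u * (a : ℂ)) (-2 * (a : ℂ)) z := by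
    simpa using ((hasDerivAt_id z).const_mul (-2 : ℂ)).mul_const (a : ℂ)
  have hexp := hl.cexp
  rw [(hexp.fun_mul hκ).deriv]
  ring
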